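/- arXiv:2502.20680 — 5 statements merged into one kernel-verified Lean document; each statement's English description precedes it below -/
import Mathlib

section
/- Let K be the 2×2 matrix K = [[0,1],[−1,0]], let σ ∈ ℝ, and let ρ, b : ℝ² → ℝ be twice continuously differentiable with b(x) ≠ 0 for all x. Then for every x ∈ ℝ², ∇·( σ K ∇ρ(x) / b(x) ) = ∇·( σ ρ(x) K ∇b(x) / b(x)² ). -/
/-!
Both sides are divergences of a scalar multiple of a rotated gradient `K ∇g`. As `K` is
antisymmetric and Hessians are symmetric, `∇·(K ∇g) = 0`, so the product rule leaves
`∇(σ / b) · K ∇ρ = -σ / b² ∇b · K ∇ρ` on the left and `∇(σ ρ / b²) · K ∇b = σ / b² ∇ρ · K ∇b`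
on the right, the `∇b`-term dropping out because `∇b · K ∇b = 0`. The two agree since
`u · K v = -(v · K u)`.
-/

open Matrix

section Antisymmetric

variable {ι R : Type*} [Fintype ι] [CommRing R] {K : Matrix ι ι R}

theorem Matrix.trace_mul_eq_zero_of_transpose_eq_neg [IsAddTorsionFree R] (hK : Kᵀ = -K)
    {H : Matrix ι ι R} (hH : Hᵀ = H) : trace (K * H) = 0 := by
  refine self_eq_neg.mp ?_
  conv_lhs => rw [← trace_transpose, transpose_mul, hK, hH, trace_mul_comm]
  simp

theorem Matrix.dotProduct_mulVec_eq_neg_of_transpose_eq_neg (hK : Kᵀ = -K) (u v : ι → R) :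
    u ⬝ᵥ K *ᵥ v = -(v ⬝ᵥ K *ᵥ u) := by
  rw [dotProduct_mulVec, ← mulVec_transpose, hK, neg_mulVec, neg_dotProduct, dotProduct_comm]

theorem Matrix.dotProduct_mulVec_self_eq_zero_of_transpose_eq_neg [IsAddTorsionFree R]
    (hK : Kᵀ = -K) (v : ι → R) : v ⬝ᵥ K *ᵥ v = 0 :=
  self_eq_neg.mp (dotProduct_mulVec_eq_neg_of_transpose_eq_neg hK v v)

end Antisymmetric

section Calculus

variable {E : Type*} [NormedAddCommGroup E] [NormedSpace ℝ E]

theorem fderiv_fderiv_apply {g : E → ℝ} {x : E} (hg : ContDiffAt ℝ 2 g x) (v w : E) :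
    fderiv ℝ (fun y => fderiv ℝ g y w) x v = fderiv ℝ (fderiv ℝ g) x v w := by
  have hd : DifferentiableAt ℝ (fderiv ℝ g) x :=
    (hg.fderiv_right (m := 1) le_rfl).differentiableAt one_ne_zero
  rw [fderiv_clm_apply hd (differentiableAt_const w)]
  simp

theorem differentiableAt_fderiv_apply {g : E → ℝ} {x : E} (hg : ContDiffAt ℝ 2 g x) (w : E) :
    DifferentiableAt ℝ (fun y => fderiv ℝ g y w) x :=
  ((hg.fderiv_right (m := 1) le_rfl).clm_apply contDiffAt_const).differentiableAt one_ne_zero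

theorem fderiv_comp_apply_eq_deriv_mul {h : ℝ → ℝ} {g : E → ℝ} {x : E}
    (hh : DifferentiableAt ℝ h (g x)) (hg : DifferentiableAt ℝ g x) (v : E) :
    fderiv ℝ (fun y => h (g y)) x v = deriv h (g x) * fderiv ℝ g x v := by
  change fderiv ℝ (h ∘ g) x v = _
  rw [(hh.hasDerivAt.comp_hasFDerivAt x hg.hasFDerivAt).fderiv]
  simp

end Calculus

section Coordinates

variable {ι : Type*} [Fintype ι] [DecidableEq ι]

noncomputable def grad (g : (ι → ℝ) → ℝ) (y : ι → ℝ) : ι → ℝ :=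
  fun j => fderiv ℝ g y (Pi.single j 1)

noncomputable def divergence (F : (ι → ℝ) → ι → ℝ) (x : ι → ℝ) : ℝ :=
  ∑ i, fderiv ℝ (fun y => F y i) x (Pi.single i 1)

noncomputable def hessian (g : (ι → ℝ) → ℝ) (x : ι → ℝ) : Matrix ι ι ℝ :=
  Matrix.of fun i j => fderiv ℝ (fderiv ℝ g) x (Pi.single i 1) (Pi.single j 1)

theorem ContinuousLinearMap.apply_eq_sum_mul_apply_single (L : (ι → ℝ) →L[ℝ] ℝ) (v : ι → ℝ) :
    L v = ∑ j, v j * L (Pi.single j 1) := by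
  have hv : ∀ j, Pi.single j (v j) = v j • Pi.single j (1 : ℝ) := fun j => by
    rw [← Pi.single_smul', smul_eq_mul, mul_one]
  conv_lhs => rw [← Finset.univ_sum_single v]
  simp only [hv, map_sum, map_smul, smul_eq_mul]

theorem fderiv_apply_eq_grad_dotProduct (g : (ι → ℝ) → ℝ) (x v : ι → ℝ) :
    fderiv ℝ g x v = grad g x ⬝ᵥ v := by
  rw [ContinuousLinearMap.apply_eq_sum_mul_apply_single, dotProduct]
  simp only [grad, mul_comm]

theorem mulVec_grad_apply (K : Matrix ι ι ℝ) (g : (ι → ℝ) → ℝ) (y : ι → ℝ) (i : ι) :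
    (K *ᵥ grad g y) i = fderiv ℝ g y (K i) := by
  rw [fderiv_apply_eq_grad_dotProduct, dotProduct_comm]
  rfl

theorem hessian_transpose {g : (ι → ℝ) → ℝ} {x : ι → ℝ} (hg : ContDiffAt ℝ 2 g x) :
    (hessian g x)ᵀ = hessian g x := by
  ext i j
  exact (hg.isSymmSndFDerivAt (by simp)).eq _ _

theorem differentiableAt_mulVec_grad_apply (K : Matrix ι ι ℝ) {g : (ι → ℝ) → ℝ} {x : ι → ℝ}
    (hg : ContDiffAt ℝ 2 g x) (i : ι) : DifferentiableAt ℝ (fun y => (K *ᵥ grad g y) i) x := by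
  simp only [mulVec_grad_apply]
  exact differentiableAt_fderiv_apply hg _

theorem divergence_mul {f : (ι → ℝ) → ℝ} {V : (ι → ℝ) → ι → ℝ} {x : ι → ℝ}
    (hf : DifferentiableAt ℝ f x) (hV : ∀ i, DifferentiableAt ℝ (fun y => V y i) x) :
    divergence (fun y i => f y * V y i) x = fderiv ℝ f x (V x) + f x * divergence V x := by
  rw [fderiv_apply_eq_grad_dotProduct]
  simp only [divergence, fderiv_fun_mul hf (hV _), _root_.add_apply, _root_.smul_apply,
    smul_eq_mul, Finset.sum_add_distrib, Finset.mul_sum, dotProduct, grad, mul_comm (V x _)]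
  ring

theorem divergence_mulVec_grad_eq_zero {K : Matrix ι ι ℝ} (hK : Kᵀ = -K) {g : (ι → ℝ) → ℝ}
    {x : ι → ℝ} (hg : ContDiffAt ℝ 2 g x) : divergence (fun y => K *ᵥ grad g y) x = 0 := by
  calc divergence (fun y => K *ᵥ grad g y) x
      = ∑ i, fderiv ℝ (fderiv ℝ g) x (Pi.single i 1) (K i) := by
        simp only [divergence, mulVec_grad_apply, fderiv_fderiv_apply hg]
    _ = trace (K * (hessian g x)ᵀ) := by
        simp only [trace, diag, mul_apply, transpose_apply, hessian, of_apply]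
        exact Finset.sum_congr rfl fun i _ =>
          ContinuousLinearMap.apply_eq_sum_mul_apply_single _ _
    _ = 0 := by
        rw [hessian_transpose hg]
        exact trace_mul_eq_zero_of_transpose_eq_neg hK (hessian_transpose hg)

theorem divergence_mul_mulVec_grad {K : Matrix ι ι ℝ} (hK : Kᵀ = -K) {f g : (ι → ℝ) → ℝ}
    {x : ι → ℝ} (hf : DifferentiableAt ℝ f x) (hg : ContDiffAt ℝ 2 g x) :
    divergence (fun y i => f y * (K *ᵥ grad g y) i) x = fderiv ℝ f x (K *ᵥ grad g x) := by
  rw [divergence_mul hf (differentiableAt_mulVec_grad_apply K hg),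
    divergence_mulVec_grad_eq_zero hK hg, mul_zero, add_zero]

theorem divergence_comp_mul_mulVec_grad_self_eq_zero {K : Matrix ι ι ℝ} (hK : Kᵀ = -K)
    {h : ℝ → ℝ} {g : (ι → ℝ) → ℝ} {x : ι → ℝ} (hh : DifferentiableAt ℝ h (g x))
    (hg : ContDiffAt ℝ 2 g x) : divergence (fun y i => h (g y) * (K *ᵥ grad g y) i) x = 0 := by
  have hg' : DifferentiableAt ℝ g x := hg.differentiableAt two_ne_zero
  rw [divergence_mul_mulVec_grad hK (f := fun y => h (g y)) (hh.comp x hg') hg,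
    fderiv_comp_apply_eq_deriv_mul hh hg', fderiv_apply_eq_grad_dotProduct,
    dotProduct_mulVec_self_eq_zero_of_transpose_eq_neg hK, mul_zero]

end Coordinates

/-- With `K = [[0,1],[-1,0]]`, `σ ∈ ℝ`, and `ρ, b : ℝ² → ℝ` of class `C²`
with `b` nowhere vanishing, for every `x`
`∇·(σ K ∇ρ / b) = ∇·(σ ρ K ∇b / b²)`. -/
theorem stmt_10 (σ : ℝ)
    (K : Matrix (Fin 2) (Fin 2) ℝ) (hK : K = !![0, 1; -1, 0])
    (ρ b : (Fin 2 → ℝ) → ℝ) (hρ : ContDiff ℝ 2 ρ) (hb : ContDiff ℝ 2 b)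
    (hbne : ∀ x : Fin 2 → ℝ, b x ≠ 0) :
    ∀ x : Fin 2 → ℝ,
      ∑ i : Fin 2,
          fderiv ℝ
            (fun y => σ * (K.mulVec (fun j => fderiv ℝ ρ y (Pi.single j 1))) i / b y) x
            (Pi.single i 1)
        = ∑ i : Fin 2,
            fderiv ℝ
              (fun y => σ * ρ y * (K.mulVec (fun j => fderiv ℝ b y (Pi.single j 1))) i
                  / b y ^ 2) x
              (Pi.single i 1) := by
  intro x
  have hKt : Kᵀ = -K := by
    subst hK
    ext i j
    fin_cases i <;> fin_cases j <;> simp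
  have hb' : DifferentiableAt ℝ b x := hb.differentiable two_ne_zero x
  have hinv : DifferentiableAt ℝ (fun t => σ / t) (b x) :=
    (differentiableAt_const σ).div differentiableAt_id (hbne x)
  have hinv2 : DifferentiableAt ℝ (fun t => σ / t ^ 2) (b x) :=
    (differentiableAt_const σ).div (differentiableAt_id.pow 2) (pow_ne_zero 2 (hbne x))
  have hW : ∀ i, DifferentiableAt ℝ (fun y => σ / b y ^ 2 * (K *ᵥ grad b y) i) x := fun i =>
    (hinv2.comp x hb').mul (differentiableAt_mulVec_grad_apply K hb.contDiffAt i)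
  calc _ = divergence (fun y i => σ / b y * (K *ᵥ grad ρ y) i) x := by
        simp only [divergence, mul_div_right_comm]
        rfl
    _ = -σ / b x ^ 2 * (grad b x ⬝ᵥ K *ᵥ grad ρ x) := by
        rw [divergence_mul_mulVec_grad hKt (f := fun y => σ / b y) (hinv.comp x hb') hρ.contDiffAt,
          fderiv_comp_apply_eq_deriv_mul hinv hb', deriv_const_div_id,
          fderiv_apply_eq_grad_dotProduct]
    _ = σ / b x ^ 2 * (grad ρ x ⬝ᵥ K *ᵥ grad b x) := by
        rw [dotProduct_mulVec_eq_neg_of_transpose_eq_neg hKt]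
        ring
    _ = divergence (fun y i => ρ y * (σ / b y ^ 2 * (K *ᵥ grad b y) i)) x := by
        rw [divergence_mul (hρ.differentiable two_ne_zero x) hW,
          divergence_comp_mul_mulVec_grad_self_eq_zero hKt hinv2 hb.contDiffAt,
          fderiv_apply_eq_grad_dotProduct]
        simp only [mul_zero, add_zero, dotProduct, Finset.mul_sum, mul_left_comm]
    _ = _ := by
        refine Finset.sum_congr rfl fun i _ => ?_
        congr 2 with y
        unfold grad
        ring
end

section
/- Let K be the 2×2 matrix K = [[0,1],[−1,0]]. Let ε, Δt, τ > 0 and β ∈ ℝ, set δ = Δt/ε, λ = Δt/ε², μ = 1 + δ/τ, and define the 2×2 matrices M = (μ I₂ + λβ K)/(μ² + (λβ)²) and R = (β τ² K + ε τ I₂)/(β² τ² + ε²). Then λ M − R = − M R. -/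
/-!
Both `M` and `R` are explicit inverses in the algebra spanned by `1` and `K`, where `K² = -1`:
`M = (μ - λβK)⁻¹` and `R = (τ⁻¹(ε - βτK))⁻¹`. Since `δ = λε`, `μ - λβK = 1 + λ τ⁻¹(ε - βτK)`,
i.e. `M⁻¹ = 1 + λR⁻¹`; multiplying by `M` on the left and by `R` on the right gives
`R = MR + λM`.
-/

section
variable {𝕜 A : Type*} [Field 𝕜] [Ring A] [Algebra 𝕜 A]

theorem smul_sub_eq_neg_mul_of_mul_eq_one {lam : 𝕜} {M R X Y : A} (hMX : M * X = 1)
    (hYR : Y * R = 1) (hXY : X = 1 + lam • Y) : lam • M - R = -(M * R) := by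
  have hR : R = M * R + lam • M := calc
    R = M * X * R := by rw [hMX, one_mul]
    _ = M * R + lam • (M * (Y * R)) := by
      rw [hXY, mul_add, mul_one, add_mul, mul_smul_comm, smul_mul_assoc, mul_assoc]
    _ = M * R + lam • M := by rw [hYR, mul_one]
  conv_lhs => rw [hR]
  abel

variable {K : A} (hK : K * K = -1) (a b : 𝕜)
include hK

theorem add_smul_mul_sub_smul_of_mul_self_eq_neg_one :
    (a • 1 + b • K) * (a • 1 - b • K) = (a ^ 2 + b ^ 2) • (1 : A) := by
  simp only [add_mul, mul_sub, smul_mul_smul, one_mul, mul_one, hK]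
  module

theorem sub_smul_mul_add_smul_of_mul_self_eq_neg_one :
    (a • 1 - b • K) * (a • 1 + b • K) = (a ^ 2 + b ^ 2) • (1 : A) := by
  simp only [sub_mul, mul_add, smul_mul_smul, one_mul, mul_one, hK]
  module

end

/-- With `K = [[0,1],[-1,0]]`, `ε, Δt, τ > 0`, `β ∈ ℝ`, `δ = Δt/ε`,
`λ = Δt/ε²`, `μ = 1 + δ/τ`, `M = (μI₂ + λβK)/(μ² + (λβ)²)` and
`R = (βτ²K + ετI₂)/(β²τ² + ε²)`, one has `λM − R = −MR`. -/
theorem stmt_13 (ε Δt τ β : ℝ) (hε : 0 < ε) (hΔt : 0 < Δt) (hτ : 0 < τ)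
    (K : Matrix (Fin 2) (Fin 2) ℝ) (hK : K = !![0, 1; -1, 0])
    (δ lam μ : ℝ) (hδ : δ = Δt / ε) (hlam : lam = Δt / ε ^ 2) (hμ : μ = 1 + δ / τ)
    (M R : Matrix (Fin 2) (Fin 2) ℝ)
    (hM : M = (μ ^ 2 + (lam * β) ^ 2)⁻¹ •
        (μ • (1 : Matrix (Fin 2) (Fin 2) ℝ) + (lam * β) • K))
    (hR : R = (β ^ 2 * τ ^ 2 + ε ^ 2)⁻¹ •
        ((β * τ ^ 2) • K + (ε * τ) • (1 : Matrix (Fin 2) (Fin 2) ℝ))) :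
    lam • M - R = -(M * R) := by
  have hKK : K * K = -1 := by simp [hK, Matrix.one_fin_two]
  have hμ_eq : μ = 1 + lam * (ε / τ) := by
    rw [hμ, hδ, hlam]
    field_simp
  have hμ_pos : 0 < μ := by rw [hμ, hδ]; positivity
  have hR_eq : R = (τ * (ε ^ 2 + (β * τ) ^ 2)⁻¹) • (ε • 1 + (β * τ) • K) := by
    rw [hR]
    module
  apply smul_sub_eq_neg_mul_of_mul_eq_one (X := μ • 1 - (lam * β) • K)
    (Y := τ⁻¹ • (ε • 1 - (β * τ) • K))
  · rw [hM, smul_mul_assoc, add_smul_mul_sub_smul_of_mul_self_eq_neg_one hKK, smul_smul,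
      inv_mul_cancel₀ (by positivity), one_smul]
  · rw [hR_eq, smul_mul_smul, sub_smul_mul_add_smul_of_mul_self_eq_neg_one hKK, smul_smul,
      show τ⁻¹ * (τ * (ε ^ 2 + (β * τ) ^ 2)⁻¹) * (ε ^ 2 + (β * τ) ^ 2) = 1 by field_simp,
      one_smul]
  · rw [hμ_eq]
    match_scalars <;> field_simp
end

section
/- Let K be the 2×2 matrix K = [[0,1],[−1,0]]. Let ε, Δt, τ > 0, γ > 0 and β ∈ ℝ, set δ = Δt/ε, λ = Δt/ε², μ_γ = 1 + γδ/τ, and define the 2×2 matrices M_γ = (μ_γ I₂ + γλβ K)/(μ_γ² + (γλβ)²) and R = (β τ² K + ε τ I₂)/(β² τ² + ε²). Then γλ M_γ − R = − M_γ R. -/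
/-!
Since `K * K = -1`, the matrices `a • 1 + b • K` form a copy of `ℂ`, the image of
`Complex.liftAux K`. There `M_γ = p⁻¹` and `R = τ q⁻¹` with `p = μ_γ - γλβ i` and
`q = ε - βτ i`, and `μ_γ - 1 = γλε/τ` gives `τ (p - 1) = γλ q`. Multiplying out the
denominators, the claimed identity is exactly this relation.
-/

open Complex

lemma rotation_mul_self_eq_neg_one : !![(0 : ℝ), 1; -1, 0] * !![0, 1; -1, 0] = -1 := by
  ext i j
  fin_cases i <;> fin_cases j <;> simp

theorem Complex.liftAux_inv_sub_mul_I {A : Type*} [Ring A] [Algebra ℝ A] (J : A)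
    (hJ : J * J = -1) (x y : ℝ) :
    liftAux J hJ (x - y * I)⁻¹ = (x ^ 2 + y ^ 2)⁻¹ • (x • (1 : A) + y • J) := by
  have hnormSq : normSq (x - y * I) = x ^ 2 + y ^ 2 := by
    simp only [normSq_apply, sub_re, ofReal_re, mul_re, I_re, mul_zero, ofReal_im, I_im, mul_one,
      sub_self, sub_zero, sub_im, mul_im, add_zero, zero_sub, mul_neg, neg_mul, neg_neg]
    ring
  rw [liftAux_apply, inv_re, inv_im, hnormSq, Algebra.algebraMap_eq_smul_one]
  simp only [sub_re, ofReal_re, mul_re, I_re, I_im, ofReal_im, sub_im, mul_im]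
  module

lemma mul_inv_sub_mul_inv_eq_neg_of_mul_sub_one {F : Type*} [Field F] {c τ p q : F}
    (hp : p ≠ 0) (hq : q ≠ 0) (h : τ * (p - 1) = c * q) :
    c * p⁻¹ - τ * q⁻¹ = -(p⁻¹ * (τ * q⁻¹)) := by
  field_simp
  linear_combination -h

/-- With `K = [[0,1],[-1,0]]`, `ε, Δt, τ, γ > 0`, `β ∈ ℝ`, `δ = Δt/ε`,
`λ = Δt/ε²`, `μ_γ = 1 + γδ/τ`, `M_γ = (μ_γI₂ + γλβK)/(μ_γ² + (γλβ)²)` and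
`R = (βτ²K + ετI₂)/(β²τ² + ε²)`, one has `γλM_γ − R = −M_γR`. -/
theorem stmt_14 (ε Δt τ γ β : ℝ) (hε : 0 < ε) (hΔt : 0 < Δt) (hτ : 0 < τ) (hγ : 0 < γ)
    (K : Matrix (Fin 2) (Fin 2) ℝ) (hK : K = !![0, 1; -1, 0])
    (δ lam μγ : ℝ) (hδ : δ = Δt / ε) (hlam : lam = Δt / ε ^ 2) (hμγ : μγ = 1 + γ * δ / τ)
    (Mγ R : Matrix (Fin 2) (Fin 2) ℝ)
    (hMγ : Mγ = (μγ ^ 2 + (γ * lam * β) ^ 2)⁻¹ •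
        (μγ • (1 : Matrix (Fin 2) (Fin 2) ℝ) + (γ * lam * β) • K))
    (hR : R = (β ^ 2 * τ ^ 2 + ε ^ 2)⁻¹ •
        ((β * τ ^ 2) • K + (ε * τ) • (1 : Matrix (Fin 2) (Fin 2) ℝ))) :
    (γ * lam) • Mγ - R = -(Mγ * R) := by
  subst hK
  set f := liftAux _ rotation_mul_self_eq_neg_one
  set p : ℂ := μγ - (γ * lam * β : ℝ) * I
  set q : ℂ := ε - (β * τ : ℝ) * I
  have hM : Mγ = f p⁻¹ := by rw [hMγ, liftAux_inv_sub_mul_I]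
  have hR' : R = f (τ • q⁻¹) := by
    rw [hR, map_smul, liftAux_inv_sub_mul_I]
    module
  have hμγ_pos : 0 < μγ := by rw [hμγ, hδ]; positivity
  have hp : p ≠ 0 := ne_of_apply_ne re (by simpa [p] using hμγ_pos.ne')
  have hq : q ≠ 0 := ne_of_apply_ne re (by simpa [q] using hε.ne')
  have hμγ_sub_one : τ * (μγ - 1) = γ * lam * ε := by
    rw [hμγ, hδ, hlam]
    field_simp
    ring
  have hpq : (τ : ℂ) * (p - 1) = (γ * lam : ℝ) * q := by
    apply Complex.ext
    · simpa [p, q] using hμγ_sub_one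
    · simp [p, q, mul_comm, mul_left_comm]
  rw [hM, hR', ← map_smul, ← map_mul, ← map_sub, ← map_neg, real_smul, real_smul,
    mul_inv_sub_mul_inv_eq_neg_of_mul_sub_one hp hq hpq]
end

section
/- Let K be the 2×2 matrix K = [[0,1],[−1,0]], let b₀ ≠ 0 and C_b > 0. There exists a constant C > 0, depending only on b₀ and C_b, such that for all ε ∈ (0,1], τ > 0, s > 0 and β ∈ ℝ with |β − b₀| ≤ C_b ε^s and C_b ε^s ≤ |b₀|/2, the matrices R = (β τ² K + ε τ I₂)/(β² τ² + ε²) and R₀ = K/b₀ satisfy ‖R − R₀‖ ≤ C (ε^s τ² + ε² + ε τ)/(ε² + τ²), where ‖·‖ is the operator norm on 2×2 real matrices. -/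
/-!
Writing `D = β²τ² + ε²`, the difference is `R - R₀ = (βτ²/D - 1/b₀) K + (ετ/D) I₂`, and `K` is
orthogonal, so `‖R - R₀‖ ≤ |βτ²/D - 1/b₀| + ετ/D`. The first coefficient equals
`(βτ²(b₀ - β) - ε²) / (D b₀)`, whose numerator is `O(ε^s τ² + ε²)`; and since `|β| ≥ |b₀|/2`,
the denominator `D` is bounded below by a multiple of `ε² + τ²`.
-/

open Matrix

lemma rotation_mem_unitary : !![(0 : ℝ), 1; -1, 0] ∈ unitary (Matrix (Fin 2) (Fin 2) ℝ) := by
  rw [Unitary.mem_iff, star_eq_conjTranspose, conjTranspose_eq_transpose_of_trivial]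
  constructor <;> ext i j <;> fin_cases i <;> fin_cases j <;> simp [mul_apply, Fin.sum_univ_two]

lemma norm_smul_add_smul_one_le {A : Type*} [NormedRing A] [StarRing A] [CStarRing A]
    [NormedAlgebra ℝ A] [Nontrivial A] {u : A} (hu : u ∈ unitary A) (a c : ℝ) :
    ‖a • u + c • (1 : A)‖ ≤ |a| + |c| := by
  calc ‖a • u + c • (1 : A)‖ ≤ ‖a • u‖ + ‖c • (1 : A)‖ := norm_add_le _ _
    _ = |a| + |c| := by
      rw [norm_smul, norm_smul, CStarRing.norm_of_mem_unitary hu, norm_one, Real.norm_eq_abs,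
        Real.norm_eq_abs, mul_one, mul_one]

section GuidingCenter

variable {b₀ β δ : ℝ}

lemma half_abs_le_abs_of_abs_sub_le (h : |β - b₀| ≤ δ) (hδ : δ ≤ |b₀| / 2) : |b₀| / 2 ≤ |β| := by
  linarith [abs_sub_abs_le_abs_sub b₀ β, abs_sub_comm b₀ β]

lemma abs_le_three_halves_abs_of_abs_sub_le (h : |β - b₀| ≤ δ) (hδ : δ ≤ |b₀| / 2) :
    |β| ≤ 3 / 2 * |b₀| := by
  linarith [abs_sub_abs_le_abs_sub β b₀]

lemma min_mul_add_sq_le {μ ε τ : ℝ} (hμ : μ ≤ β ^ 2) :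
    min μ 1 * (ε ^ 2 + τ ^ 2) ≤ β ^ 2 * τ ^ 2 + ε ^ 2 := by
  nlinarith [min_le_left μ 1, min_le_right μ 1, sq_nonneg ε, sq_nonneg τ]

lemma abs_div_sub_inv_le {ε τ : ℝ} (hb₀ : b₀ ≠ 0) (hε : ε ≠ 0) :
    |β * τ ^ 2 / (β ^ 2 * τ ^ 2 + ε ^ 2) - b₀⁻¹|
      ≤ (|β| * τ ^ 2 * |β - b₀| + ε ^ 2) / ((β ^ 2 * τ ^ 2 + ε ^ 2) * |b₀|) := by
  have hD : 0 < β ^ 2 * τ ^ 2 + ε ^ 2 := by positivity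
  have key : β * τ ^ 2 / (β ^ 2 * τ ^ 2 + ε ^ 2) - b₀⁻¹
      = (β * τ ^ 2 * (b₀ - β) - ε ^ 2) / ((β ^ 2 * τ ^ 2 + ε ^ 2) * b₀) := by
    field_simp
    ring
  rw [key, abs_div, abs_mul, abs_of_pos hD]
  gcongr
  calc |β * τ ^ 2 * (b₀ - β) - ε ^ 2| ≤ |β * τ ^ 2 * (b₀ - β)| + |ε ^ 2| := abs_sub _ _
    _ = |β| * τ ^ 2 * |β - b₀| + ε ^ 2 := by
      rw [abs_mul, abs_mul, abs_sub_comm, abs_of_nonneg (sq_nonneg τ),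
        abs_of_nonneg (sq_nonneg ε)]

lemma abs_div_sub_inv_add_abs_div_le {Cb η ε τ : ℝ} (hb₀ : b₀ ≠ 0) (hCb : 0 ≤ Cb) (hη : 0 ≤ η)
    (hε : 0 < ε) (hτ : 0 < τ) (hβ : |β - b₀| ≤ Cb * η) (hsmall : Cb * η ≤ |b₀| / 2) :
    |β * τ ^ 2 / (β ^ 2 * τ ^ 2 + ε ^ 2) - b₀⁻¹| + |ε * τ / (β ^ 2 * τ ^ 2 + ε ^ 2)|
      ≤ (3 / 2 * Cb + |b₀|⁻¹ + 1) / min (b₀ ^ 2 / 4) 1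
          * ((η * τ ^ 2 + ε ^ 2 + ε * τ) / (ε ^ 2 + τ ^ 2)) := by
  set D := β ^ 2 * τ ^ 2 + ε ^ 2
  have hD : 0 < D := by positivity
  have hb₀' : 0 < |b₀| := abs_pos.mpr hb₀
  have hDm : min (b₀ ^ 2 / 4) 1 * (ε ^ 2 + τ ^ 2) ≤ D := by
    refine min_mul_add_sq_le ?_
    have := half_abs_le_abs_of_abs_sub_le hβ hsmall
    nlinarith [sq_abs b₀, sq_abs β]
  have ha : |β * τ ^ 2 / D - b₀⁻¹| ≤ (3 / 2 * Cb * η * τ ^ 2 + |b₀|⁻¹ * ε ^ 2) / D := by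
    have hβτ : |β| * τ ^ 2 * |β - b₀| ≤ 3 / 2 * |b₀| * τ ^ 2 * (Cb * η) := by
      have := abs_le_three_halves_abs_of_abs_sub_le hβ hsmall
      gcongr
    calc _ ≤ (|β| * τ ^ 2 * |β - b₀| + ε ^ 2) / (D * |b₀|) := abs_div_sub_inv_le hb₀ hε.ne'
      _ ≤ (3 / 2 * |b₀| * τ ^ 2 * (Cb * η) + ε ^ 2) / (D * |b₀|) := by gcongr
      _ = _ := by field_simp
  have hc : |ε * τ / D| = ε * τ / D := abs_of_pos (by positivity)
  have hnum : 3 / 2 * Cb * η * τ ^ 2 + |b₀|⁻¹ * ε ^ 2 + ε * τ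
      ≤ (3 / 2 * Cb + |b₀|⁻¹ + 1) * (η * τ ^ 2 + ε ^ 2 + ε * τ) := by
    have hinv : 0 ≤ |b₀|⁻¹ := by positivity
    have hετ := (mul_pos hε hτ).le
    nlinarith [mul_nonneg hCb (sq_nonneg ε), mul_nonneg hCb hετ, mul_nonneg hinv hετ,
      mul_nonneg hinv (mul_nonneg hη (sq_nonneg τ)), mul_nonneg hη (sq_nonneg τ)]
  calc _ ≤ (3 / 2 * Cb * η * τ ^ 2 + |b₀|⁻¹ * ε ^ 2) / D + ε * τ / D := by rw [hc]; gcongr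
    _ ≤ (3 / 2 * Cb + |b₀|⁻¹ + 1) * (η * τ ^ 2 + ε ^ 2 + ε * τ) / D := by
      rw [← add_div]; gcongr
    _ ≤ (3 / 2 * Cb + |b₀|⁻¹ + 1) * (η * τ ^ 2 + ε ^ 2 + ε * τ)
          / (min (b₀ ^ 2 / 4) 1 * (ε ^ 2 + τ ^ 2)) := by gcongr
    _ = _ := by field_simp

end GuidingCenter

/-- With `K = [[0,1],[-1,0]]`, `b₀ ≠ 0`, `C_b > 0`, there is `C > 0`
(depending only on `b₀, C_b`) such that for all `ε ∈ (0,1]`, `τ > 0`, `s > 0`, `β ∈ ℝ`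
with `|β − b₀| ≤ C_b ε^s` and `C_b ε^s ≤ |b₀|/2`, the matrices
`R = (βτ²K + ετI₂)/(β²τ² + ε²)` and `R₀ = K/b₀` satisfy
`‖R − R₀‖ ≤ C (ε^s τ² + ε² + ετ)/(ε² + τ²)` in the operator norm
(on `ℝ²` with the Euclidean norm). -/
theorem stmt_15 (b₀ Cb : ℝ) (hb₀ : b₀ ≠ 0) (hCb : 0 < Cb)
    (K : Matrix (Fin 2) (Fin 2) ℝ) (hK : K = !![0, 1; -1, 0]) :
    ∃ C > (0 : ℝ), ∀ ε τ s β : ℝ, ε ∈ Set.Ioc (0 : ℝ) 1 → 0 < τ → 0 < s →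
      |β - b₀| ≤ Cb * ε ^ s → Cb * ε ^ s ≤ |b₀| / 2 →
      ‖Matrix.toEuclideanCLM (𝕜 := ℝ)
          ((β ^ 2 * τ ^ 2 + ε ^ 2)⁻¹ •
              ((β * τ ^ 2) • K + (ε * τ) • (1 : Matrix (Fin 2) (Fin 2) ℝ))
            - b₀⁻¹ • K)‖
        ≤ C * ((ε ^ s * τ ^ 2 + ε ^ 2 + ε * τ) / (ε ^ 2 + τ ^ 2)) := by
  refine ⟨(3 / 2 * Cb + |b₀|⁻¹ + 1) / min (b₀ ^ 2 / 4) 1, by positivity, ?_⟩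
  rintro ε τ s β ⟨hε, -⟩ hτ - hβ hsmall
  set D := β ^ 2 * τ ^ 2 + ε ^ 2
  have hsplit : D⁻¹ • ((β * τ ^ 2) • K + (ε * τ) • (1 : Matrix (Fin 2) (Fin 2) ℝ)) - b₀⁻¹ • K
      = (β * τ ^ 2 / D - b₀⁻¹) • K + (ε * τ / D) • 1 := by
    simp only [div_eq_inv_mul]
    module
  rw [hsplit, map_add, map_smul, map_smul, map_one]
  refine (norm_smul_add_smul_one_le (Unitary.map_mem _ (hK ▸ rotation_mem_unitary)) _ _).trans ?_
  exact abs_div_sub_inv_add_abs_div_le hb₀ hCb.le (Real.rpow_nonneg hε.le s) hε hτ hβ hsmall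
end

section
/- Let K be the 2×2 matrix K = [[0,1],[−1,0]]. Let ε, Δt, σ, τ > 0, set δ = Δt/ε and λ = Δt/ε². Let E : ℝ² → ℝ² and b̃ : ℝ² → ℝ be arbitrary functions, and for y ∈ ℝ² define M(y) = ((1+δ/τ) I₂ + λ b̃(εy) K)/((1+δ/τ)² + (λ b̃(εy))²) and R(y) = (b̃(εy) τ² K + ε τ I₂)/((b̃(εy) τ)² + ε²). Let x⁰, v⁰ ∈ ℝ² and ξ₀, ξ₁, … ∈ ℝ², and define (xⁿ, vⁿ) by the APSI1 recursion vⁿ⁺¹ = M(xⁿ)(vⁿ + δ E(xⁿ) + √(2σδ/τ) ξₙ), xⁿ⁺¹ = xⁿ + δ vⁿ⁺¹. Define zⁿ = ε⁻¹ vⁿ − R(xⁿ⁻¹) E(xⁿ⁻¹) for n ≥ 1. Then z¹ = M(x⁰)( ε⁻¹ v⁰ − R(x⁰) E(x⁰) + √(2σδ/(ε²τ)) ξ₀ ), and for every n ≥ 1, zⁿ⁺¹ = M(xⁿ)( zⁿ − ( R(xⁿ) E(xⁿ) − R(xⁿ⁻¹) E(xⁿ⁻¹) ) + √(2σδ/(ε²τ))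 ξₙ ). -/
set_option maxHeartbeats 1000000 in
private lemma stmt16_key_aux (δ ε τ lam b : ℝ) (hε : 0 < ε) (hδpos : 0 < δ) (hτ : 0 < τ)
    (hlam' : lam = δ / ε)
    (K : Matrix (Fin 2) (Fin 2) ℝ) (hK2 : K * K = -1) :
    (((1 + δ / τ) ^ 2 + (lam * b) ^ 2)⁻¹ •
        ((1 + δ / τ) • (1 : Matrix (Fin 2) (Fin 2) ℝ) + (lam * b) • K)) *
      ((δ / ε) • (1 : Matrix (Fin 2) (Fin 2) ℝ) +
        ((b * τ) ^ 2 + ε ^ 2)⁻¹ •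
          ((b * τ ^ 2) • K + (ε * τ) • (1 : Matrix (Fin 2) (Fin 2) ℝ)))
      = ((b * τ) ^ 2 + ε ^ 2)⁻¹ •
          ((b * τ ^ 2) • K + (ε * τ) • (1 : Matrix (Fin 2) (Fin 2) ℝ)) := by
  have hD1 : (1 + δ / τ) ^ 2 + (lam * b) ^ 2 ≠ 0 := by positivity
  have hD2 : (b * τ) ^ 2 + ε ^ 2 ≠ 0 := by positivity
  simp only [Matrix.smul_mul, Matrix.mul_smul, Matrix.mul_add, Matrix.add_mul,
    Matrix.one_mul, Matrix.mul_one, hK2, smul_add, smul_smul, smul_neg]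
  rw [hlam']
  match_scalars <;> field_simp <;> ring

set_option maxHeartbeats 1000000 in
/-- algebraic identities for the deviation variables `zⁿ` of the APSI1
scheme: `z¹ = M(x⁰)(ε⁻¹v⁰ − R(x⁰)E(x⁰) + √(2σδ/(ε²τ)) ξ₀)` and, for `n ≥ 1`,
`zⁿ⁺¹ = M(xⁿ)(zⁿ − (R(xⁿ)E(xⁿ) − R(xⁿ⁻¹)E(xⁿ⁻¹)) + √(2σδ/(ε²τ)) ξₙ)`. -/
theorem stmt_16 (ε Δt σ τ : ℝ) (hε : 0 < ε) (hΔt : 0 < Δt) (hσ : 0 < σ) (hτ : 0 < τ)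
    (δ lam : ℝ) (hδ : δ = Δt / ε) (hlam : lam = Δt / ε ^ 2)
    (K : Matrix (Fin 2) (Fin 2) ℝ) (hK : K = !![0, 1; -1, 0])
    (E : (Fin 2 → ℝ) → (Fin 2 → ℝ)) (btil : (Fin 2 → ℝ) → ℝ)
    (M R : (Fin 2 → ℝ) → Matrix (Fin 2) (Fin 2) ℝ)
    (hM : ∀ y : Fin 2 → ℝ,
      M y = ((1 + δ / τ) ^ 2 + (lam * btil (ε • y)) ^ 2)⁻¹ •
        ((1 + δ / τ) • (1 : Matrix (Fin 2) (Fin 2) ℝ) + (lam * btil (ε • y)) • K))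
    (hR : ∀ y : Fin 2 → ℝ,
      R y = ((btil (ε • y) * τ) ^ 2 + ε ^ 2)⁻¹ •
        ((btil (ε • y) * τ ^ 2) • K + (ε * τ) • (1 : Matrix (Fin 2) (Fin 2) ℝ)))
    (x0 v0 : Fin 2 → ℝ) (ξ : ℕ → Fin 2 → ℝ)
    (x v : ℕ → Fin 2 → ℝ) (hx0 : x 0 = x0) (hv0 : v 0 = v0)
    (hv : ∀ n : ℕ, v (n + 1) =
      (M (x n)).mulVec (v n + δ • E (x n) + Real.sqrt (2 * σ * δ / τ) • ξ n))
    (hx : ∀ n : ℕ, x (n + 1) = x n + δ • v (n + 1))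
    (z : ℕ → Fin 2 → ℝ)
    (hz : ∀ n : ℕ, z (n + 1) = ε⁻¹ • v (n + 1) - (R (x n)).mulVec (E (x n))) :
    z 1 = (M (x 0)).mulVec
        (ε⁻¹ • v 0 - (R (x 0)).mulVec (E (x 0))
          + Real.sqrt (2 * σ * δ / (ε ^ 2 * τ)) • ξ 0)
    ∧ ∀ n : ℕ, 1 ≤ n →
        z (n + 1) = (M (x n)).mulVec
          (z n - ((R (x n)).mulVec (E (x n)) - (R (x (n - 1))).mulVec (E (x (n - 1))))
            + Real.sqrt (2 * σ * δ / (ε ^ 2 * τ)) • ξ n) := by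
  have hδpos : 0 < δ := by rw [hδ]; positivity
  have hτδ : (0:ℝ) < 1 + δ / τ := by positivity
  have hlam' : lam = δ / ε := by rw [hlam, hδ, div_div, ← sq]
  have hK2 : K * K = -1 := by
    rw [hK]
    ext i j
    fin_cases i <;> fin_cases j <;>
      simp [Matrix.mul_apply, Fin.sum_univ_two, Matrix.one_apply]
  -- key matrix identity : M y * ((δ/ε) • 1 + R y) = R y
  have key : ∀ y : Fin 2 → ℝ,
      M y * ((δ / ε) • (1 : Matrix (Fin 2) (Fin 2) ℝ) + R y) = R y := by
    intro y
    rw [hM y, hR y]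
    exact stmt16_key_aux δ ε τ lam (btil (ε • y)) hε hδpos hτ hlam' K hK2
  have hsqrt : Real.sqrt (2 * σ * δ / (ε ^ 2 * τ))
      = ε⁻¹ * Real.sqrt (2 * σ * δ / τ) := by
    have h : 2 * σ * δ / (ε ^ 2 * τ) = ε⁻¹ ^ 2 * (2 * σ * δ / τ) := by
      field_simp
    rw [h, Real.sqrt_mul (sq_nonneg _), Real.sqrt_sq (by positivity)]
  -- main step identity
  have step : ∀ n : ℕ,
      ε⁻¹ • v (n + 1) - (R (x n)).mulVec (E (x n))
        = (M (x n)).mulVec (ε⁻¹ • v n - (R (x n)).mulVec (E (x n))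
            + Real.sqrt (2 * σ * δ / (ε ^ 2 * τ)) • ξ n) := by
    intro n
    have hkey : (M (x n)).mulVec ((R (x n)).mulVec (E (x n)))
        = (R (x n)).mulVec (E (x n)) - (δ / ε) • (M (x n)).mulVec (E (x n)) := by
      have h1 := congrArg (fun A : Matrix (Fin 2) (Fin 2) ℝ => A.mulVec (E (x n)))
        (key (x n))
      simp only [Matrix.mulVec_mulVec] at h1 ⊢
      rw [Matrix.mul_add, Matrix.mul_smul, Matrix.mul_one] at h1
      rw [Matrix.add_mulVec, Matrix.smul_mulVec] at h1
      rw [← h1]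
      abel
    rw [hv n, hsqrt]
    simp only [Matrix.mulVec_add, Matrix.mulVec_smul, Matrix.mulVec_sub]
    rw [hkey]
    have hes : ε⁻¹ • (δ • (M (x n)).mulVec (E (x n))) = (δ / ε) • (M (x n)).mulVec (E (x n)) := by
      rw [smul_smul]; congr 1; field_simp
    simp only [smul_add]
    rw [hes]
    module
  refine ⟨?_, ?_⟩
  · rw [hz 0, step 0]
  · intro n hn
    obtain ⟨m, rfl⟩ := Nat.exists_eq_add_of_le hn
    rw [hz (1 + m), step (1 + m)]
    have h1 : 1 + m = m + 1 := by omega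
    have h2 : 1 + m - 1 = m := by omega
    rw [h2, h1, hz m]
    congr 1
    abel
end
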